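/- For a finitely supported multi-index ν and a unit multi-index e, the double sum over 0 < η ≤ ν and 0 < ℓ ≤ η of C(ν,η)·C(η,ℓ)·[1/2]_{|η-ℓ|}·[1/2]_{|ℓ|}·[1/2]_{|ν+e-η|} is at most 3·[1/2]_{|ν+e|}. -/

import Mathlib

/-- `ffHalf n = |(1/2)_n|`, the absolute value of the falling factorial of `1/2`. -/
noncomputable def ffHalf (n : ℕ) : ℝ := |(descPochhammer ℝ n).eval (1/2 : ℝ)|

/-- degree `|ν|` of a multi-index: the sum of its entries. -/
def mdeg (ν : ℕ →₀ ℕ) : ℕ := ν.sum fun _ k => k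

/-- multi-index binomial coefficient `C(ν,η) = ∏_j C(ν_j, η_j)`. -/
def mchoose (ν η : ℕ →₀ ℕ) : ℕ := ∏ j ∈ ν.support, (ν j).choose (η j)

/-!
Write `a n = |(1/2)_n|`. From `a (n+2) = a (n+1) (n + 1/2)` one gets
`a (n+1) = (n+1)! catalan n / (2 * 4^n)`, so the Catalan recursion
`catalan (n+1) = ∑ catalan i * catalan (n-i)` becomes `∑_k C(n,k) a_k a_(n-k) = 4 a_n`
for `n ≥ 2` (equivalently, the exponential generating function `g = 2 - √(1-x)` of `a` satisfies
`g² = 4g - 3 - x`). Splitting `C(n+1,k) = C(n,k) + C(n,k-1)` and using the symmetry `k ↔ n+1-k`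
turns this into `∑_(0<k≤n) C(n,k) a_k a_(n+1-k) = a_(n+1)` for `n ≥ 1`.

The multi-index sums collapse to these one-variable sums by the Vandermonde identity
`∑_(η ≤ ν, |η| = k) C(ν,η) = C(|ν|,k)`, the coefficient of `X^k` in
`∏_j (1+X)^(ν_j) = (1+X)^|ν|`.
The inner sum over `l` is then at most `3 a_|η|`, and the outer sum at most `3 a_(|ν|+1)`.
-/

open Finset Nat

theorem Finset.sum_Iic_eq_add_sum_Ioc {α M : Type*} [PartialOrder α] [OrderBot α]
    [LocallyFiniteOrder α] [AddCommMonoid M] (f : α → M) (b : α) :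
    ∑ x ∈ Iic b, f x = f ⊥ + ∑ x ∈ Ioc ⊥ b, f x := by
  rw [← Icc_bot, Icc_eq_cons_Ioc bot_le, sum_cons]

theorem Finset.sum_Iic_choose_succ_mul_eq_two_mul {R : Type*} [CommSemiring R] (u : ℕ → R)
    (n : ℕ) :
    ∑ k ∈ Iic (n + 1), ((n + 1).choose k : R) * u k * u (n + 1 - k)
      = 2 * ∑ k ∈ Iic n, (n.choose k : R) * u k * u (n + 1 - k) := by
  have hIic : ∀ m (g : ℕ → ℕ → R),
      ∑ k ∈ Iic m, g k (m - k) = ∑ p ∈ antidiagonal m, g p.1 p.2 := fun m g => by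
    rw [Nat.sum_antidiagonal_eq_sum_range_succ, Nat.range_succ_eq_Iic]
  have hleft := hIic (n + 1) fun i j => ((n + 1).choose i : R) * u i * u j
  have hright : ∑ k ∈ Iic n, (n.choose k : R) * u k * u (n + 1 - k)
      = ∑ p ∈ antidiagonal n, (n.choose p.1 : R) * (u p.1 * u (p.2 + 1)) := by
    rw [← hIic n fun i j => (n.choose i : R) * (u i * u (j + 1))]
    refine sum_congr rfl fun k hk => ?_
    rw [mul_assoc, Nat.sub_add_comm (mem_Iic.mp hk)]
  have hswap : ∑ p ∈ antidiagonal n, (n.choose p.2 : R) * (u (p.1 + 1) * u p.2)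
      = ∑ p ∈ antidiagonal n, (n.choose p.1 : R) * (u p.1 * u (p.2 + 1)) := by
    rw [← Nat.sum_antidiagonal_swap]
    exact sum_congr rfl fun p _ => by rw [Prod.fst_swap, Prod.snd_swap, mul_comm (u _)]
  rw [hleft, hright, two_mul]
  simp only [mul_assoc]
  rw [sum_antidiagonal_choose_succ_mul (fun i j => u i * u j), hswap]

namespace Finsupp

variable {ι α R : Type*} [DecidableEq ι] [DecidableEq α] [CommSemiring R]
  [AddCommMonoid α] [PartialOrder α] [CanonicallyOrderedAdd α] [OrderBot α]
  [LocallyFiniteOrder α]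

theorem sum_Iic_prod_eq_prod_sum (ν : ι →₀ α) (g : ι → α → R) :
    ∑ η ∈ Iic ν, ∏ i ∈ ν.support, g i (η i)
      = ∏ i ∈ ν.support, ∑ c ∈ Iic (ν i), g i c := by
  rw [prod_sum]
  refine sum_nbij' (fun η i _ => η i) (fun p => indicator ν.support p) ?_ ?_ ?_ ?_ ?_
  · intro η hη
    simp only [mem_Iic] at hη
    simpa using fun i _ => hη i
  · intro p hp
    simp only [Finset.mem_pi, mem_Iic] at hp ⊢
    intro i
    by_cases hi : i ∈ ν.support
    · rw [indicator_of_mem hi]; exact hp i hi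
    · rw [indicator_of_notMem hi]; exact zero_le
  · intro η hη
    ext i
    simp only [mem_Iic] at hη
    by_cases hi : i ∈ ν.support
    · rw [indicator_of_mem hi]
    · rw [indicator_of_notMem hi]
      exact (nonpos_iff_eq_zero.mp ((hη i).trans (notMem_support_iff.mp hi).le)).symm
  · intro p _
    ext i hi
    exact indicator_of_mem hi p
  · intro η _
    exact (prod_attach ν.support fun i => g i (η i)).symm

end Finsupp

theorem ffHalf_zero : ffHalf 0 = 1 := by simp [ffHalf]

theorem ffHalf_one : ffHalf 1 = 1 / 2 := by norm_num [ffHalf]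

theorem ffHalf_nonneg (n : ℕ) : 0 ≤ ffHalf n := abs_nonneg _

theorem ffHalf_succ_succ (n : ℕ) : ffHalf (n + 2) = ffHalf (n + 1) * (n + 1 / 2) := by
  rw [ffHalf, descPochhammer_succ_eval, abs_mul, ← ffHalf, abs_of_nonpos (by push_cast; linarith)]
  push_cast
  ring

theorem ffHalf_succ_mul (n : ℕ) : ffHalf (n + 1) * (2 * 4 ^ n) = n ! * centralBinom n := by
  induction n with
  | zero => simp [ffHalf_one]
  | succ n ih =>
    have hc : ((n + 1 : ℕ) : ℝ) * centralBinom (n + 1) = 2 * (2 * n + 1) * centralBinom n := by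
      exact_mod_cast succ_mul_centralBinom_succ n
    rw [ffHalf_succ_succ, factorial_succ]
    push_cast at hc ⊢
    linear_combination (2 * (2 * n + 1)) * ih - n ! * hc

theorem ffHalf_succ_eq_catalan (n : ℕ) :
    ffHalf (n + 1) = (n + 1)! * catalan n / (2 * 4 ^ n) := by
  rw [eq_div_iff (by positivity), ffHalf_succ_mul, ← succ_mul_catalan_eq_centralBinom,
    factorial_succ]
  push_cast
  ring

theorem choose_mul_ffHalf_succ_mul_ffHalf_succ (i j : ℕ) :
    ((i + j + 2).choose (i + 1) : ℝ) * ffHalf (i + 1) * ffHalf (j + 1)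
      = (i + j + 2)! / 4 ^ (i + j + 1) * (catalan i * catalan j) := by
  have h := add_choose_mul_factorial_mul_factorial (j + 1) (i + 1)
  rw [show j + 1 + (i + 1) = i + j + 2 by ring] at h
  rw [ffHalf_succ_eq_catalan, ffHalf_succ_eq_catalan, ← h]
  push_cast
  field_simp
  ring

theorem sum_Iic_choose_mul_ffHalf_mul_ffHalf (n : ℕ) :
    ∑ k ∈ Iic (n + 2), ((n + 2).choose k : ℝ) * ffHalf k * ffHalf (n + 2 - k)
      = 4 * ffHalf (n + 2) := by
  have hinterior : ∑ p ∈ antidiagonal n,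
      ((n + 2).choose (p.1 + 1) : ℝ) * ffHalf (p.1 + 1) * ffHalf (p.2 + 1)
        = 2 * ffHalf (n + 2) := by
    have hterm : ∀ p ∈ antidiagonal n,
        ((n + 2).choose (p.1 + 1) : ℝ) * ffHalf (p.1 + 1) * ffHalf (p.2 + 1)
          = (n + 2)! / 4 ^ (n + 1) * (catalan p.1 * catalan p.2 : ℕ) := fun p hp => by
      rw [← mem_antidiagonal.mp hp, Nat.cast_mul]
      exact choose_mul_ffHalf_succ_mul_ffHalf_succ p.1 p.2
    rw [sum_congr rfl hterm, ← mul_sum, ← Nat.cast_sum, ← catalan_succ',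
      ffHalf_succ_eq_catalan]
    field_simp
  rw [← Nat.range_succ_eq_Iic, ← Nat.sum_antidiagonal_eq_sum_range_succ
    (fun i j => ((n + 2).choose i : ℝ) * ffHalf i * ffHalf j), antidiagonal_succ_succ']
  simp only [sum_cons, sum_map, choose_zero_right, choose_self, cast_one, ffHalf_zero, mul_one,
    one_mul, Function.Embedding.coe_prodMap, Function.Embedding.coeFn_mk, Prod.map_fst,
    Prod.map_snd, succ_eq_add_one, hinterior]
  ring

theorem sum_Ioc_choose_mul_ffHalf_mul_ffHalf_le (k : ℕ) :
    ∑ m ∈ Ioc 0 k, (k.choose m : ℝ) * (ffHalf m * ffHalf (k - m)) ≤ 3 * ffHalf k := by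
  match k with
  | 0 => simp [ffHalf_zero]
  | 1 => norm_num [ffHalf_zero, ffHalf_one]
  | n + 2 =>
    have h := sum_Iic_choose_mul_ffHalf_mul_ffHalf n
    rw [sum_Iic_eq_add_sum_Ioc, Nat.bot_eq_zero] at h
    simp only [choose_zero_right, cast_one, ffHalf_zero, tsub_zero, one_mul] at h
    simp only [← mul_assoc]
    linarith

theorem sum_Ioc_choose_mul_ffHalf_mul_ffHalf_succ (n : ℕ) :
    ∑ k ∈ Ioc 0 (n + 1), ((n + 1).choose k : ℝ) * ffHalf k * ffHalf (n + 2 - k)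
      = ffHalf (n + 2) := by
  have h := sum_Iic_choose_succ_mul_eq_two_mul ffHalf (n + 1)
  rw [sum_Iic_choose_mul_ffHalf_mul_ffHalf, sum_Iic_eq_add_sum_Ioc, Nat.bot_eq_zero] at h
  simp only [choose_zero_right, cast_one, ffHalf_zero, tsub_zero, one_mul] at h
  linarith

theorem sum_Ioc_choose_mul_sum_Ioc_choose_mul_ffHalf_le (n : ℕ) :
    ∑ k ∈ Ioc 0 n, (n.choose k : ℝ) *
        ((∑ m ∈ Ioc 0 k, (k.choose m : ℝ) * (ffHalf m * ffHalf (k - m))) * ffHalf (n + 1 - k))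
      ≤ 3 * ffHalf (n + 1) := by
  match n with
  | 0 => simp [ffHalf_one]
  | n + 1 =>
    calc _ ≤ ∑ k ∈ Ioc 0 (n + 1),
            ((n + 1).choose k : ℝ) * (3 * ffHalf k * ffHalf (n + 2 - k)) := by
          gcongr with k
          · exact ffHalf_nonneg _
          · exact sum_Ioc_choose_mul_ffHalf_mul_ffHalf_le k
      _ = 3 * ffHalf (n + 2) := by
          rw [← sum_Ioc_choose_mul_ffHalf_mul_ffHalf_succ, mul_sum]
          exact sum_congr rfl fun k _ => by ring

theorem mdeg_add (η ν : ℕ →₀ ℕ) : mdeg (η + ν) = mdeg η + mdeg ν :=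
  map_add Finsupp.degree η ν

theorem mdeg_single (i k : ℕ) : mdeg (Finsupp.single i k) = k :=
  Finsupp.degree_single i k

theorem mdeg_sub_of_le {η ν : ℕ →₀ ℕ} (h : η ≤ ν) : mdeg (ν - η) = mdeg ν - mdeg η := by
  have := mdeg_add (ν - η) η
  rw [tsub_add_cancel_of_le h] at this
  omega

theorem mdeg_eq_sum_of_le {η ν : ℕ →₀ ℕ} (h : η ≤ ν) : mdeg η = ∑ i ∈ ν.support, η i :=
  Finsupp.sum_of_support_subset η (Finsupp.support_mono h) (fun _ k => k) (fun _ _ => rfl)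

open Polynomial in
theorem sum_Iic_mchoose_mul_X_pow (ν : ℕ →₀ ℕ) :
    ∑ η ∈ Iic ν, (mchoose ν η : ℕ[X]) * X ^ mdeg η = (X + 1) ^ mdeg ν := by
  have hterm : ∀ η ∈ Iic ν, (mchoose ν η : ℕ[X]) * X ^ mdeg η
      = ∏ i ∈ ν.support, ((ν i).choose (η i) : ℕ[X]) * X ^ η i := by
    intro η hη
    rw [mdeg_eq_sum_of_le (mem_Iic.mp hη), mchoose, prod_mul_distrib, prod_pow_eq_pow_sum,
      Nat.cast_prod]
  rw [sum_congr rfl hterm,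
    Finsupp.sum_Iic_prod_eq_prod_sum ν fun i c => ((ν i).choose c : ℕ[X]) * X ^ c,
    mdeg_eq_sum_of_le le_rfl, ← prod_pow_eq_pow_sum]
  refine prod_congr rfl fun i _ => ?_
  rw [add_pow, ← Nat.range_succ_eq_Iic]
  exact sum_congr rfl fun c _ => by rw [one_pow, mul_one, mul_comm]

open Polynomial in
theorem sum_mchoose_filter_mdeg (ν : ℕ →₀ ℕ) (k : ℕ) :
    ∑ η ∈ Iic ν with mdeg η = k, mchoose ν η = (mdeg ν).choose k := by
  have := congr_arg (coeff · k) (sum_Iic_mchoose_mul_X_pow ν)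
  simp only [finsetSum_coeff, coeff_natCast_mul, coeff_X_pow, coeff_X_add_one_pow,
    Nat.cast_id, mul_ite, mul_one, mul_zero] at this
  rw [sum_filter, ← this]
  simp only [eq_comm]

theorem sum_Iic_mchoose_mul {R : Type*} [Semiring R] (ν : ℕ →₀ ℕ) (f : ℕ → R) :
    ∑ η ∈ Iic ν, (mchoose ν η : R) * f (mdeg η)
      = ∑ k ∈ Iic (mdeg ν), ((mdeg ν).choose k : R) * f k := by
  have hmaps : ∀ η ∈ Iic ν, mdeg η ∈ Iic (mdeg ν) := fun η hη =>
    mem_Iic.mpr (Finsupp.degree_mono (mem_Iic.mp hη))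
  rw [← sum_fiberwise_of_maps_to hmaps]
  refine sum_congr rfl fun k _ => ?_
  rw [← sum_mchoose_filter_mdeg, Nat.cast_sum, sum_mul]
  refine sum_congr rfl fun η hη => ?_
  rw [(mem_filter.mp hη).2]

theorem sum_Ioc_mchoose_mul {R : Type*} [Ring R] (ν : ℕ →₀ ℕ) (f : ℕ → R) :
    ∑ η ∈ Ioc 0 ν, (mchoose ν η : R) * f (mdeg η)
      = ∑ k ∈ Ioc 0 (mdeg ν), ((mdeg ν).choose k : R) * f k := by
  have h := sum_Iic_mchoose_mul ν f
  rw [sum_Iic_eq_add_sum_Ioc, sum_Iic_eq_add_sum_Ioc, bot_eq_zero, bot_eq_zero] at h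
  have h0 : (mchoose ν 0 : R) * f (mdeg 0) = ((mdeg ν).choose 0 : R) * f 0 := by
    simp [mchoose, mdeg]
  rwa [h0, add_right_inj] at h

theorem ffHalf_multiindex_double_sum_le (ν e : ℕ →₀ ℕ) (j : ℕ)
    (he : e = Finsupp.single j 1) :
    ∑ η ∈ Finset.Ioc 0 ν, ∑ l ∈ Finset.Ioc 0 η,
        (mchoose ν η : ℝ) * (mchoose η l : ℝ) * ffHalf (mdeg (η - l))
          * ffHalf (mdeg l) * ffHalf (mdeg (ν + e - η))
      ≤ 3 * ffHalf (mdeg (ν + e)) := by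
  subst he
  have hdeg : mdeg (ν + Finsupp.single j 1) = mdeg ν + 1 := by
    rw [mdeg_add, mdeg_single]
  have hinner : ∀ η ∈ Ioc 0 ν, ∑ l ∈ Ioc 0 η,
      (mchoose ν η : ℝ) * (mchoose η l : ℝ) * ffHalf (mdeg (η - l))
        * ffHalf (mdeg l) * ffHalf (mdeg (ν + Finsupp.single j 1 - η))
      = mchoose ν η * ((∑ m ∈ Ioc 0 (mdeg η), ((mdeg η).choose m : ℝ)
          * (ffHalf m * ffHalf (mdeg η - m))) * ffHalf (mdeg ν + 1 - mdeg η)) := by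
    intro η hη
    rw [mdeg_sub_of_le ((mem_Ioc.mp hη).2.trans le_self_add), hdeg,
      ← sum_Ioc_mchoose_mul η fun m => ffHalf m * ffHalf (mdeg η - m), sum_mul, mul_sum]
    refine sum_congr rfl fun l hl => ?_
    rw [mdeg_sub_of_le (mem_Ioc.mp hl).2]
    ring
  rw [sum_congr rfl hinner, sum_Ioc_mchoose_mul ν fun k =>
    (∑ m ∈ Ioc 0 k, (k.choose m : ℝ) * (ffHalf m * ffHalf (k - m))) * ffHalf (mdeg ν + 1 - k),
    hdeg]
  exact sum_Ioc_choose_mul_sum_Ioc_choose_mul_ffHalf_le (mdeg ν)
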